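/- Let H = (V, E) be a hypergraph with |V| ≥ 2 and ∪E = V. If the automorphism group of H is 2-set transitive, then the Boolean function f_H is join-irreducible. -/

import Mathlib

open Classical

/-- Boolean functions of arity `n` over GF(2). -/
abbrev BFn (n : ℕ) := (Fin n → ZMod 2) → ZMod 2

/-- Boolean functions of arbitrary arity. -/
abbrev BF := Σ n : ℕ, BFn n

/-- `g` is a simple minor of `f`. -/
def Minor {m n : ℕ} (g : BFn m) (f : BFn n) : Prop :=
  ∃ σ : Fin n → Fin m, ∀ a : Fin m → ZMod 2, g a = f (fun i => a (σ i))

def MinorS (G F : BF) : Prop := Minor G.2 F.2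

def EquivS (G F : BF) : Prop := MinorS G F ∧ MinorS F G

def StrictMinorS (G F : BF) : Prop := MinorS G F ∧ ¬ MinorS F G

/-- `x i` is an essential variable of `f`. -/
def Essential {n : ℕ} (f : BFn n) (i : Fin n) : Prop :=
  ∃ a b : Fin n → ZMod 2, (∀ j, j ≠ i → a j = b j) ∧ f a ≠ f b

noncomputable def essArity {n : ℕ} (f : BFn n) : ℕ :=
  (Finset.univ.filter fun i => Essential f i).card

noncomputable def essS (F : BF) : ℕ := essArity F.2

/-- `f_{i=j}` : identify variable `i` with variable `j`. -/
def identify {n : ℕ} (f : BFn n) (i j : Fin n) : BFn n :=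
  fun a => f (fun t => if t = i then a j else a t)

/-- `G` is a lower cover of `F` in the poset of equivalence classes. -/
def LowerCover (G F : BF) : Prop :=
  StrictMinorS G F ∧ ¬ ∃ H : BF, StrictMinorS G H ∧ StrictMinorS H F

/-- `F` is join-irreducible: some strict minor dominates all strict minors. -/
def JoinIrred (F : BF) : Prop :=
  ∃ F' : BF, StrictMinorS F' F ∧ ∀ G : BF, StrictMinorS G F → MinorS G F'

noncomputable def arityGap (F : BF) : ℕ :=
  sInf {d : ℕ | ∃ G : BF, StrictMinorS G F ∧ d = essS F - essS G}

/-- Hypergraphs on vertex set `Fin n`. -/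
abbrev HG (n : ℕ) := Finset (Finset (Fin n))

abbrev HGS := Σ n : ℕ, HG n

/-- `h` is a quotient map from `(Fin m, E')` to `(Fin n, E)`. -/
def IsQuotientMap {m n : ℕ} (E' : HG m) (E : HG n) (h : Fin m → Fin n) : Prop :=
  ∀ S : Finset (Fin n), S ∈ E ↔ Odd (E'.filter (fun T => T.image h = S)).card

/-- `H ⪯ H'` : there is a quotient map from `H'` to `H`. -/
def MinorH (H H' : HGS) : Prop :=
  ∃ h : Fin H'.1 → Fin H.1, IsQuotientMap H'.2 H.2 h

/-- The hypergraph `H_{h'}` determined by a hypergraph and a map. -/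
noncomputable def quotientHG {m n : ℕ} (E' : HG m) (h : Fin m → Fin n) : HG n :=
  Finset.univ.filter fun S => Odd (E'.filter (fun T => T.image h = S)).card

/-- The Boolean function of a hypergraph: evaluation of `Σ_{E} Π_{i ∈ E} x_i`. -/
def fHG {n : ℕ} (E : HG n) : BFn n :=
  fun a => ∑ S ∈ E, ∏ i ∈ S, a i

/-- A Steiner system (`2-(n,k,1)` design). -/
def IsSteiner {n : ℕ} (k : ℕ) (E : HG n) : Prop :=
  (∀ S ∈ E, S.card = k) ∧ ∀ i j : Fin n, i ≠ j → ∃! S, S ∈ E ∧ i ∈ S ∧ j ∈ S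

/-- Vertex set of the identification hypergraph `H_e`, `e = {i,j}`:
`(V \ e) ∪ {l_e}` where `none` plays the role of the new vertex `l_e`. -/
abbrev IdVert {n : ℕ} (i j : Fin n) := Option {x : Fin n // x ≠ i ∧ x ≠ j}

/-- The underlying subset of `V` of a set of vertices of `H_e` (ignoring `l_e`). -/
def baseSet {n : ℕ} {i j : Fin n} (E : Finset (IdVert i j)) : Finset (Fin n) :=
  E.biUnion fun o => o.elim ∅ fun x => {x.val}

/-- Exactly one or all three of `p`, `q`, `r` hold. -/
def OneOrAllThree (p q r : Prop) : Prop :=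
  (p ∧ ¬q ∧ ¬r) ∨ (¬p ∧ q ∧ ¬r) ∨ (¬p ∧ ¬q ∧ r) ∨ (p ∧ q ∧ r)

/-- The hyperedges of the identification hypergraph `H_e`, `e = {i,j}`. -/
noncomputable def idEdges {n : ℕ} (𝓔 : HG n) (i j : Fin n) :
    Finset (Finset (IdVert i j)) :=
  Finset.univ.filter fun E =>
    (none ∉ E ∧ baseSet E ∈ 𝓔) ∨
    (none ∈ E ∧ OneOrAllThree (insert i (insert j (baseSet E)) ∈ 𝓔)
      (insert i (baseSet E) ∈ 𝓔) (insert j (baseSet E) ∈ 𝓔))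

/-- The hyperedges of the induced hypergraph `H_{-e}` on `V \ e`, `e = {i,j}`. -/
noncomputable def minusEdges {n : ℕ} (𝓔 : HG n) (i j : Fin n) :
    Finset (Finset {x : Fin n // x ≠ i ∧ x ≠ j}) :=
  Finset.univ.filter fun E => E.image Subtype.val ∈ 𝓔

/-- `φ` is an isomorphism of hypergraphs. -/
def IsHGIso {α β : Type*} (𝓐 : Finset (Finset α)) (𝓑 : Finset (Finset β))
    (φ : α ≃ β) : Prop :=
  ∀ E : Finset α, E ∈ 𝓐 ↔ E.image φ ∈ 𝓑

/-- The (loopless) graph associated with a set of 2-element edges. -/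
def graphOf {n : ℕ} (𝓔 : HG n) : SimpleGraph (Fin n) where
  Adj v w := v ≠ w ∧ ({v, w} : Finset (Fin n)) ∈ 𝓔
  symm := by
    constructor
    intro v w h
    exact ⟨h.1.symm, by rw [Finset.pair_comm]; exact h.2⟩
  loopless := by
    constructor
    intro v h
    exact h.1 rfl

/-!
A minor of `f_H` along an injective variable map is equivalent to `f_H`, so every strict minor
arises from a non-injective map and is therefore a minor of some identification minor `f_{i=j}`. Automorphisms of `H` leave `f_H` invariant, and 2-set transitivity
moves any pair `{i₀, j₀}` onto any pair `{i, j}`, making all `f_{i=j}` minors of one fixed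
`f_{i₀=j₀}`. That one is a strict minor: it has lost the essential variable `i₀`, whereas every
variable of `f_H` is essential because `∪E = V`: on the indicator of a minimal edge through `v`,
flipping `v` changes exactly one monomial.
-/

open Finset

section BooleanFunctions

variable {l m n : ℕ}

lemma Minor.trans {g : BFn l} {h : BFn m} {f : BFn n} (hgh : Minor g h) (hhf : Minor h f) :
    Minor g f := by
  obtain ⟨σ, hσ⟩ := hgh
  obtain ⟨τ, hτ⟩ := hhf
  exact ⟨fun i => σ (τ i), fun a => by rw [hσ, hτ]⟩

lemma exists_mem_essential_of_ne (f : BFn n) (T : Finset (Fin n)) {c d : Fin n → ZMod 2}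
    (hcd : ∀ t ∉ T, c t = d t) (hne : f c ≠ f d) : ∃ i ∈ T, Essential f i := by
  induction T using Finset.induction_on generalizing c with
  | empty => exact absurd (congrArg f (funext fun t => hcd t (notMem_empty t))) hne
  | @insert i T hiT ih =>
    set c' := Function.update c i (d i)
    by_cases h : f c = f c'
    · have hc'd : ∀ t ∉ T, c' t = d t := by
        intro t ht
        by_cases hti : t = i
        · subst hti; simp [c']
        · simp only [c', Function.update_of_ne hti]
          exact hcd t (by simp [hti, ht])
      obtain ⟨i', hi', he⟩ := ih hc'd (h ▸ hne)
      exact ⟨i', mem_insert_of_mem hi', he⟩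
    · exact ⟨i, mem_insert_self _ _, c, c', fun j hj => (Function.update_of_ne hj _ _).symm, h⟩

lemma Essential.exists_preimage {g : BFn m} {f : BFn n} {σ : Fin n → Fin m}
    (hσ : ∀ a, g a = f fun i => a (σ i)) {j : Fin m} (hj : Essential g j) :
    ∃ i, σ i = j ∧ Essential f i := by
  obtain ⟨a, b, hab, hne⟩ := hj
  rw [hσ, hσ] at hne
  obtain ⟨i, hi, hess⟩ := exists_mem_essential_of_ne f (univ.filter (σ · = j))
    (fun t ht => hab _ (by simpa using ht)) hne
  exact ⟨i, (mem_filter.1 hi).2, hess⟩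

lemma essArity_le_of_minor {g : BFn m} {f : BFn n} (h : Minor g f) :
    essArity g ≤ essArity f := by
  obtain ⟨σ, hσ⟩ := h
  calc essArity g ≤ #((univ.filter (Essential f)).image σ) := by
        refine card_le_card fun j hj => ?_
        obtain ⟨i, rfl, hi⟩ := (mem_filter.1 hj).2.exists_preimage hσ
        exact mem_image_of_mem σ (mem_filter.2 ⟨mem_univ i, hi⟩)
    _ ≤ essArity f := card_image_le

lemma essArity_eq_of_forall_essential {f : BFn n} (hf : ∀ i, Essential f i) :
    essArity f = n := by
  simp [essArity, hf]

lemma identify_minor (f : BFn n) (i j : Fin n) : Minor (identify f i j) f :=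
  ⟨fun t => if t = i then j else t, fun a => congrArg f (funext fun _ => (apply_ite a _ _ _).symm)⟩

lemma not_essential_identify (f : BFn n) {i j : Fin n} (hij : i ≠ j) :
    ¬ Essential (identify f i j) i := by
  rintro ⟨a, b, hab, hne⟩
  refine hne (congrArg f (funext fun t => ?_))
  by_cases ht : t = i
  · simp [ht, hab j hij.symm]
  · simp [ht, hab t ht]

lemma essArity_identify_lt (f : BFn n) {i j : Fin n} (hij : i ≠ j) :
    essArity (identify f i j) < n := by
  simpa [essArity] using card_lt_univ_of_notMem (s := univ.filter (Essential (identify f i j)))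
    (by simpa using not_essential_identify f hij)

lemma identify_apply_comp_of_eq (f : BFn n) {σ : Fin n → Fin m} {i j : Fin n} (h : σ i = σ j)
    (a : Fin m → ZMod 2) : identify f i j (fun t => a (σ t)) = f fun t => a (σ t) := by
  refine congrArg f (funext fun t => ?_)
  by_cases ht : t = i
  · rw [if_pos ht, ht, h]
  · rw [if_neg ht]

lemma minor_identify_of_eq {g : BFn m} {f : BFn n} {σ : Fin n → Fin m}
    (hσ : ∀ a, g a = f fun i => a (σ i)) {i j : Fin n} (h : σ i = σ j) :
    Minor g (identify f i j) :=
  ⟨σ, fun a => by rw [hσ, identify_apply_comp_of_eq f h]⟩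

lemma minor_of_injective [Nonempty (Fin n)] {g : BFn m} {f : BFn n} {σ : Fin n → Fin m}
    (hσ : ∀ a, g a = f fun i => a (σ i)) (hinj : σ.Injective) : Minor f g :=
  ⟨Function.invFun σ, fun a => by
    rw [hσ]
    exact congrArg f (funext fun i => congrArg a (Function.leftInverse_invFun hinj i).symm)⟩

lemma identify_minor_identify_of_invariant {f : BFn n} {φ : Fin n ≃ Fin n}
    (hφ : ∀ a, f (fun t => a (φ t)) = f a) {i j i₀ j₀ : Fin n} (hij : i ≠ j)
    (himg : ({i₀, j₀} : Finset (Fin n)).image φ = {i, j}) :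
    Minor (identify f i j) (identify f i₀ j₀) := by
  set σ : Fin n → Fin n := fun t => if φ t = i then j else φ t
  have hσ : ∀ t ∈ ({i₀, j₀} : Finset (Fin n)), σ t = j := by
    intro t ht
    have : φ t ∈ ({i, j} : Finset (Fin n)) := himg ▸ mem_image_of_mem φ ht
    rcases mem_insert.1 this with h | h
    · simp [σ, h]
    · simp [σ, mem_singleton.1 h, hij.symm]
  refine ⟨σ, fun a => ?_⟩
  have hσφ : (fun t => a (σ t)) = fun t => (fun s => if s = i then a j else a s) (φ t) :=
    funext fun t => apply_ite a _ _ _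
  rw [identify_apply_comp_of_eq f ((hσ i₀ (by simp)).trans (hσ j₀ (by simp)).symm), hσφ]
  exact (hφ _).symm

theorem joinIrred_of_forall_identify_minor {f : BFn n} (hf : ∀ i, Essential f i)
    {i₀ j₀ : Fin n} (hij₀ : i₀ ≠ j₀)
    (hident : ∀ i j, i ≠ j → Minor (identify f i j) (identify f i₀ j₀)) :
    JoinIrred ⟨n, f⟩ := by
  refine ⟨⟨n, identify f i₀ j₀⟩, ⟨identify_minor f i₀ j₀, fun h => ?_⟩, fun G hG => ?_⟩
  · have := essArity_le_of_minor h
    rw [essArity_eq_of_forall_essential hf] at this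
    exact (essArity_identify_lt f hij₀).not_ge this
  · obtain ⟨σ, hσ⟩ := hG.1
    have : Nonempty (Fin n) := ⟨i₀⟩
    by_cases hinj : σ.Injective
    · exact absurd (minor_of_injective hσ hinj) hG.2
    · obtain ⟨i, j, hσij, hij⟩ : ∃ i j, σ i = σ j ∧ i ≠ j := by
        simpa [Function.Injective] using hinj
      exact (minor_identify_of_eq hσ hσij).trans (hident i j hij)

end BooleanFunctions

section Hypergraphs

variable {n : ℕ}

lemma fHG_indicator (𝓔 : HG n) (U : Finset (Fin n)) :
    fHG 𝓔 (fun t => if t ∈ U then 1 else 0) = #(𝓔.filter (· ⊆ U)) := by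
  simp only [fHG, prod_boole, ← subset_iff, sum_boole]

lemma fHG_essential {𝓔 : HG n} {E : Finset (Fin n)} {v : Fin n} (hE : E ∈ 𝓔) (hv : v ∈ E) :
    Essential (fHG 𝓔) v := by
  obtain ⟨E₀, hE₀, hmin⟩ := exists_min_image (𝓔.filter (v ∈ ·)) card
    ⟨E, mem_filter.2 ⟨hE, hv⟩⟩
  simp only [mem_filter, and_imp] at hE₀ hmin
  obtain ⟨hE₀, hvE₀⟩ := hE₀
  have hsplit : 𝓔.filter (· ⊆ E₀) = insert E₀ (𝓔.filter (· ⊆ E₀.erase v)) := by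
    ext S
    simp only [mem_filter, mem_insert, subset_erase]
    constructor
    · rintro ⟨hS, hSE₀⟩
      by_cases hvS : v ∈ S
      · exact .inl (eq_of_subset_of_card_le hSE₀ (hmin S hS hvS))
      · exact .inr ⟨hS, hSE₀, hvS⟩
    · rintro (rfl | ⟨hS, hSE₀, -⟩)
      exacts [⟨hE₀, subset_rfl⟩, ⟨hS, hSE₀⟩]
  have hE₀_notMem : E₀ ∉ 𝓔.filter (· ⊆ E₀.erase v) := fun h =>
    notMem_erase v E₀ ((mem_filter.1 h).2 hvE₀)
  refine ⟨fun t => if t ∈ E₀.erase v then 1 else 0, fun t => if t ∈ E₀ then 1 else 0,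
    fun _ ht => by simp [ht], ?_⟩
  rw [fHG_indicator, fHG_indicator, hsplit, card_insert_of_notMem hE₀_notMem]
  simp

lemma fHG_comp_equiv {𝓔 : HG n} {φ : Fin n ≃ Fin n} (hφ : IsHGIso 𝓔 𝓔 φ)
    (a : Fin n → ZMod 2) : fHG 𝓔 (fun t => a (φ t)) = fHG 𝓔 a := by
  have hmap : 𝓔.map (mapEmbedding φ.toEmbedding).toEmbedding = 𝓔 := by
    refine eq_of_subset_of_card_le (fun S hS => ?_) (card_map _).ge
    obtain ⟨T, hT, rfl⟩ := mem_map.1 hS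
    convert (hφ T).1 hT using 1
    ext x
    simp [← Equiv.eq_symm_apply]
  conv_rhs => rw [fHG, ← hmap, sum_map]
  simp [fHG, prod_map]

end Hypergraphs

/-- a hypergraph with at least two vertices, no isolated vertex,
and a 2-set transitive automorphism group yields a join-irreducible function. -/
theorem stmt14 {n : ℕ} (hn : 2 ≤ n) (𝓔 : HG n)
    (hcov : ∀ v : Fin n, ∃ E ∈ 𝓔, v ∈ E)
    (htrans : ∀ e e' : Finset (Fin n), e.card = 2 → e'.card = 2 →
      ∃ φ : Fin n ≃ Fin n, IsHGIso 𝓔 𝓔 φ ∧ e.image φ = e') :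
    JoinIrred ⟨n, fHG 𝓔⟩ := by
  obtain ⟨i₀, j₀, hij₀⟩ : ∃ i₀ j₀ : Fin n, i₀ ≠ j₀ :=
    ⟨⟨0, by omega⟩, ⟨1, by omega⟩, by simp [Fin.ext_iff]⟩
  refine joinIrred_of_forall_identify_minor (fun v => ?_) hij₀ fun i j hij => ?_
  · obtain ⟨E, hE, hv⟩ := hcov v
    exact fHG_essential hE hv
  · obtain ⟨φ, hφ, himg⟩ := htrans {i₀, j₀} {i, j} (card_pair hij₀) (card_pair hij)
    exact identify_minor_identify_of_invariant (fHG_comp_equiv hφ) hij (by convert himg)
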